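/- Let ξ > κ := (1/2)·arccosh(3/2) be real, b ≥ 0 an integer, and for N ≥ 2 and 0 ≤ d ≤ N−1, 0 ≤ l ≤ 2d define f_{d,l} as above. Define S_N := (−1)^{N−1}·Σ_{d=0}^{N−1} Σ_{l=0}^{2d} (−1)^d f_{d,l}. Then S_N > (1 − e^{−ξ/2})·Σ_{l=0}^{2N−2} f_{N−1,l} > 0. -/

import Mathlib

noncomputable def arcosh (x : ℝ) : ℝ := Real.log (x + Real.sqrt (x^2 - 1))

noncomputable def kappa : ℝ := arcosh (3/2) / 2

noncomputable def f (ξ : ℝ) (b N d l : ℕ) : ℝ :=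
  Real.exp ((2*(b:ℝ)+1) * ((d:ℝ)^2 + (d:ℝ)) * ξ / (2*(N:ℝ))) *
    (2 * Real.sinh ((2*(d:ℝ)+1) * ξ / (2*(N:ℝ)))) *
  ∏ k ∈ Finset.Icc 1 l,
    (4 * Real.sinh ((2*(d:ℝ)+1+(k:ℝ)) * ξ / (2*(N:ℝ))) *
       Real.sinh ((2*(d:ℝ)+1-(k:ℝ)) * ξ / (2*(N:ℝ))))


/-! Write `T d = ∑_{l ≤ 2d} f_{d,l}`. Passing from `d` to `d + 1` multiplies every `f_{d,l}` by at
least `exp ((2d+4) ξ / (2N))`: the exponential factor grows by `exp ((2b+1)(2d+2) ξ / (2N))`, the leading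
`sinh` by `exp (ξ / N)` (since `exp (a - c) sinh c ≤ sinh a`), and the product factorwise. Hence `T` is
increasing and `T (N-2) ≤ exp (-ξ) T (N-1)`. For an increasing nonnegative sequence the reversed
alternating sum `(-1)^(N-1) ∑ (-1)^d T d` lies between `T (N-1) - T (N-2)` and `T (N-1)`, so
`S_N ≥ (1 - exp (-ξ)) T (N-1) > (1 - exp (-ξ/2)) T (N-1) > 0`. -/

open Finset Real

section AlternatingSum

variable {R : Type*} [CommRing R]

theorem neg_one_pow_mul_alternating_sum_succ (T : ℕ → R) (n : ℕ) :
    (-1) ^ (n + 1) * ∑ d ∈ range (n + 2), (-1) ^ d * T d =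
      T (n + 1) - (-1) ^ n * ∑ d ∈ range (n + 1), (-1) ^ d * T d := by
  rw [sum_range_succ _ (n + 1), mul_add, ← mul_assoc, ← pow_add, ← two_mul, pow_mul]
  simp only [neg_one_sq, one_pow, one_mul, pow_succ]
  ring

variable [LinearOrder R] [IsStrictOrderedRing R]

theorem Monotone.neg_one_pow_mul_alternating_sum_mem_Icc {T : ℕ → R} (hT : Monotone T)
    (h0 : 0 ≤ T 0) (n : ℕ) :
    (-1) ^ n * ∑ d ∈ range (n + 1), (-1) ^ d * T d ∈ Set.Icc 0 (T n) := by
  induction n with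
  | zero => simpa using h0
  | succ n ih =>
    rw [neg_one_pow_mul_alternating_sum_succ, Set.mem_Icc]
    have := hT n.le_succ
    constructor <;> linarith [ih.1, ih.2]

theorem Monotone.sub_le_neg_one_pow_mul_alternating_sum {T : ℕ → R} (hT : Monotone T)
    (h0 : 0 ≤ T 0) (n : ℕ) :
    T (n + 1) - T n ≤ (-1) ^ (n + 1) * ∑ d ∈ range (n + 2), (-1) ^ d * T d := by
  rw [neg_one_pow_mul_alternating_sum_succ]
  linarith [(hT.neg_one_pow_mul_alternating_sum_mem_Icc h0 n).2]

end AlternatingSum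

theorem Real.exp_sub_mul_sinh_le_sinh {a c : ℝ} (h : c ≤ a) :
    exp (a - c) * sinh c ≤ sinh a := by
  have : exp (-a) ≤ exp (a - c - c) := exp_le_exp.2 (by linarith)
  rw [sinh_eq, sinh_eq, mul_div_assoc', mul_sub, ← exp_add, ← exp_add]
  ring_nf at this ⊢
  linarith

section SinhFactor

variable {x : ℝ} {d k : ℕ}

lemma two_mul_add_one_sub_pos (hk : k ≤ 2 * d) : (0 : ℝ) < 2 * d + 1 - k := by
  have : (k : ℝ) ≤ 2 * d := by exact_mod_cast hk
  linarith

lemma sinh_factor_nonneg (hx : 0 ≤ x) (hk : k ≤ 2 * d) :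
    0 ≤ 4 * sinh ((2 * d + 1 + k) * x) * sinh ((2 * d + 1 - k) * x) := by
  have := sinh_nonneg_iff.2 (mul_nonneg (two_mul_add_one_sub_pos hk).le hx)
  positivity

lemma sinh_factor_pos (hx : 0 < x) (hk : k ≤ 2 * d) :
    0 < 4 * sinh ((2 * d + 1 + k) * x) * sinh ((2 * d + 1 - k) * x) := by
  have := sinh_pos_iff.2 (mul_pos (two_mul_add_one_sub_pos hk) hx)
  positivity

lemma prod_sinh_factor_pos {l : ℕ} (hx : 0 < x) (hl : l ≤ 2 * d) :
    0 < ∏ k ∈ Icc 1 l, 4 * sinh ((2 * d + 1 + k) * x) * sinh ((2 * d + 1 - k) * x) :=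
  prod_pos fun _ hk => sinh_factor_pos hx ((mem_Icc.1 hk).2.trans hl)

lemma sinh_factor_le_succ (hx : 0 ≤ x) (hk : k ≤ 2 * d) :
    4 * sinh ((2 * d + 1 + k) * x) * sinh ((2 * d + 1 - k) * x) ≤
      4 * sinh ((2 * ((d + 1 : ℕ) : ℝ) + 1 + k) * x) *
        sinh ((2 * ((d + 1 : ℕ) : ℝ) + 1 - k) * x) := by
  have hpos := sinh_nonneg_iff.2 (mul_nonneg (two_mul_add_one_sub_pos hk).le hx)
  push_cast
  gcongr <;> exact sinh_le_sinh.2 (by nlinarith)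

lemma prod_sinh_factor_nonneg {l : ℕ} (hx : 0 ≤ x) (hl : l ≤ 2 * d) :
    0 ≤ ∏ k ∈ Icc 1 l, 4 * sinh ((2 * d + 1 + k) * x) * sinh ((2 * d + 1 - k) * x) :=
  prod_nonneg fun _ hk => sinh_factor_nonneg hx ((mem_Icc.1 hk).2.trans hl)

lemma prod_sinh_factor_le_succ {l : ℕ} (hx : 0 ≤ x) (hl : l ≤ 2 * d) :
    ∏ k ∈ Icc 1 l, 4 * sinh ((2 * d + 1 + k) * x) * sinh ((2 * d + 1 - k) * x) ≤
      ∏ k ∈ Icc 1 l, 4 * sinh ((2 * ((d + 1 : ℕ) : ℝ) + 1 + k) * x) *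
        sinh ((2 * ((d + 1 : ℕ) : ℝ) + 1 - k) * x) :=
  prod_le_prod (fun _ hk => sinh_factor_nonneg hx ((mem_Icc.1 hk).2.trans hl))
    fun _ hk => sinh_factor_le_succ hx ((mem_Icc.1 hk).2.trans hl)

end SinhFactor

section LevelTerms

variable {ξ : ℝ} {b N d l : ℕ}

theorem f_nonneg (hξ : 0 ≤ ξ) (hl : l ≤ 2 * d) : 0 ≤ f ξ b N d l := by
  simp only [f, mul_div_assoc]
  have hx : 0 ≤ ξ / (2 * N) := by positivity
  have := prod_sinh_factor_nonneg hx hl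
  positivity

theorem f_pos (hξ : 0 < ξ) (hN : 0 < N) (hl : l ≤ 2 * d) : 0 < f ξ b N d l := by
  simp only [f, mul_div_assoc]
  have hx : 0 < ξ / (2 * N) := by positivity
  have := prod_sinh_factor_pos hx hl
  positivity

theorem exp_mul_f_le_f_succ (hξ : 0 ≤ ξ) (hl : l ≤ 2 * d) :
    exp ((2 * d + 4) * (ξ / (2 * N))) * f ξ b N d l ≤ f ξ b N (d + 1) l := by
  simp only [f, mul_div_assoc]
  set x := ξ / (2 * N)
  have hx : 0 ≤ x := by positivity
  have hexp : exp ((2 * d + 2) * x) * exp ((2 * b + 1) * (d ^ 2 + d) * x) ≤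
      exp ((2 * b + 1) * (((d + 1 : ℕ) : ℝ) ^ 2 + ((d + 1 : ℕ) : ℝ)) * x) := by
    rw [← exp_add]
    push_cast
    gcongr
    nlinarith [show 0 ≤ (b : ℝ) * (d + 1) * x by positivity]
  have hsinh : exp (2 * x) * sinh ((2 * d + 1) * x) ≤ sinh ((2 * ((d + 1 : ℕ) : ℝ) + 1) * x) := by
    convert exp_sub_mul_sinh_le_sinh (a := (2 * ((d + 1 : ℕ) : ℝ) + 1) * x) (c := (2 * d + 1) * x)
      (by push_cast; nlinarith) using 3
    push_cast; ring
  have hprod := prod_sinh_factor_le_succ hx hl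
  have hprod0 := prod_sinh_factor_nonneg hx hl
  calc exp ((2 * d + 4) * x) * (exp ((2 * b + 1) * (d ^ 2 + d) * x) * (2 * sinh ((2 * d + 1) * x)) *
        ∏ k ∈ Icc 1 l, 4 * sinh ((2 * d + 1 + k) * x) * sinh ((2 * d + 1 - k) * x))
      = (exp ((2 * d + 2) * x) * exp ((2 * b + 1) * (d ^ 2 + d) * x)) *
          (2 * (exp (2 * x) * sinh ((2 * d + 1) * x))) *
          ∏ k ∈ Icc 1 l, 4 * sinh ((2 * d + 1 + k) * x) * sinh ((2 * d + 1 - k) * x) := by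
        rw [show (2 * (d : ℝ) + 4) * x = (2 * d + 2) * x + 2 * x by ring, exp_add]; ring
    _ ≤ _ := by gcongr

theorem kappa_pos : 0 < kappa := half_pos (Real.arcosh_pos (by norm_num))

noncomputable def levelSum (ξ : ℝ) (b N d : ℕ) : ℝ := ∑ l ∈ range (2 * d + 1), f ξ b N d l

section LevelSum

variable {ξ : ℝ} {b N : ℕ}

theorem levelSum_nonneg (hξ : 0 ≤ ξ) (d : ℕ) : 0 ≤ levelSum ξ b N d :=
  sum_nonneg fun _ hl => f_nonneg hξ (by rw [mem_range] at hl; omega)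

theorem levelSum_pos (hξ : 0 < ξ) (hN : 0 < N) (d : ℕ) : 0 < levelSum ξ b N d :=
  sum_pos (fun _ hl => f_pos hξ hN (by rw [mem_range] at hl; omega)) nonempty_range_add_one

theorem exp_mul_levelSum_le_levelSum_succ (hξ : 0 ≤ ξ) (d : ℕ) :
    exp ((2 * d + 4) * (ξ / (2 * N))) * levelSum ξ b N d ≤ levelSum ξ b N (d + 1) := by
  rw [levelSum, mul_sum]
  calc ∑ l ∈ range (2 * d + 1), exp ((2 * d + 4) * (ξ / (2 * N))) * f ξ b N d l
      ≤ ∑ l ∈ range (2 * d + 1), f ξ b N (d + 1) l :=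
        sum_le_sum fun _ hl => exp_mul_f_le_f_succ hξ (by rw [mem_range] at hl; omega)
    _ ≤ levelSum ξ b N (d + 1) :=
        sum_le_sum_of_subset_of_nonneg (range_subset_range.2 (by omega))
          fun _ hl _ => f_nonneg hξ (by rw [mem_range] at hl; omega)

theorem levelSum_monotone (hξ : 0 ≤ ξ) : Monotone (levelSum ξ b N) :=
  monotone_nat_of_le_succ fun d =>
    (le_mul_of_one_le_left (levelSum_nonneg hξ d) (one_le_exp (by positivity))).trans
      (exp_mul_levelSum_le_levelSum_succ hξ d)

theorem levelSum_le_exp_neg_mul (hξ : 0 ≤ ξ) (n : ℕ) :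
    levelSum ξ b (n + 2) n ≤ exp (-ξ) * levelSum ξ b (n + 2) (n + 1) := by
  have h := exp_mul_levelSum_le_levelSum_succ (b := b) (N := n + 2) hξ n
  rw [show (2 * (n : ℝ) + 4) * (ξ / (2 * ((n + 2 : ℕ) : ℝ))) = ξ by push_cast; field_simp; ring]
    at h
  rw [exp_neg, ← div_eq_inv_mul, le_div_iff₀' (exp_pos ξ)]
  exact h

end LevelSum

theorem stmt18 (ξ : ℝ) (hξ : kappa < ξ) (b N : ℕ) (hN : 2 ≤ N) :
    (1 - Real.exp (-ξ/2)) * (∑ l ∈ Finset.range (2*N - 1), f ξ b N (N-1) l) <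
      (-1:ℝ)^(N-1) *
        ∑ d ∈ Finset.range N, ∑ l ∈ Finset.range (2*d + 1), (-1:ℝ)^d * f ξ b N d l ∧
    0 < (1 - Real.exp (-ξ/2)) * ∑ l ∈ Finset.range (2*N - 1), f ξ b N (N-1) l := by
  obtain ⟨n, rfl⟩ : ∃ n, N = n + 2 := ⟨N - 2, by omega⟩
  have hξ0 : 0 < ξ := kappa_pos.trans hξ
  rw [show n + 2 - 1 = n + 1 from rfl]
  have hlast : ∑ l ∈ range (2 * (n + 2) - 1), f ξ b (n + 2) (n + 1) l =
      levelSum ξ b (n + 2) (n + 1) := by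
    rw [levelSum, show 2 * (n + 2) - 1 = 2 * (n + 1) + 1 by omega]
  have hS : ∑ d ∈ range (n + 2), ∑ l ∈ range (2 * d + 1), (-1 : ℝ) ^ d * f ξ b (n + 2) d l =
      ∑ d ∈ range (n + 2), (-1) ^ d * levelSum ξ b (n + 2) d := by
    simp only [levelSum, mul_sum]
  rw [hlast, hS]
  set T := levelSum ξ b (n + 2)
  have hT : 0 < T (n + 1) := levelSum_pos hξ0 (by omega) (n + 1)
  have hexp : exp (-ξ) < exp (-ξ / 2) := exp_lt_exp.2 (by linarith)
  have hexp1 : exp (-ξ / 2) < 1 := exp_lt_one_iff.2 (by linarith)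
  refine ⟨?_, mul_pos (by linarith) hT⟩
  calc (1 - exp (-ξ / 2)) * T (n + 1)
      < (1 - exp (-ξ)) * T (n + 1) := by gcongr
    _ ≤ T (n + 1) - T n := by linarith [levelSum_le_exp_neg_mul (b := b) hξ0.le n]
    _ ≤ _ := (levelSum_monotone hξ0.le).sub_le_neg_one_pow_mul_alternating_sum
        (levelSum_nonneg hξ0.le 0) n
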